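/- arXiv:2003.06716 — 3 statements merged into one kernel-verified Lean document; each statement's English description precedes it below -/
import Mathlib

section
/- Let d ≥ 1, let v_i, v_j ∈ ℝ^d, let ω ∈ ℝ^d with ‖ω‖ = 1, and let κ ∈ [0,1]. Set g = v_i − v_j and define v_i' = v_i − (κ/2)·(g − ‖g‖·ω) and v_j' = v_j + (κ/2)·(g − ‖g‖·ω). Then v_i' + v_j' = v_i + v_j, and the kinetic energy satisfies the identity ‖v_i'‖² + ‖v_j'‖² − (‖v_i‖² + ‖v_j‖²) = κ(κ−1)·‖g‖·(‖g‖ − ⟨g, ω⟩); in particular, since ⟨g,ω⟩ ≤ ‖g‖ and κ(κ−1) ≤ 0, the energy is non-increasing, ‖v_i'‖² + ‖v_j'‖² ≤ ‖v_i‖² + ‖v_j‖², with equality whenever κ ∈ {0,1}. -/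
open scoped RealInnerProductSpace

/-- The regularized (sigmoid) acceptance-rejection collision with κ ∈ [0,1]
conserves momentum, satisfies an explicit energy dissipation identity, is
energy non-increasing, and conserves energy when κ ∈ {0,1}. -/
theorem stmt_2 (d : ℕ) (hd : 1 ≤ d) (vi vj ω : EuclideanSpace ℝ (Fin d))
    (hω : ‖ω‖ = 1) (κ : ℝ) (hκ0 : 0 ≤ κ) (hκ1 : κ ≤ 1)
    (g : EuclideanSpace ℝ (Fin d)) (hg : g = vi - vj)
    (vi' vj' : EuclideanSpace ℝ (Fin d))
    (hvi' : vi' = vi - (κ / 2) • (g - ‖g‖ • ω))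
    (hvj' : vj' = vj + (κ / 2) • (g - ‖g‖ • ω)) :
    vi' + vj' = vi + vj ∧
    ‖vi'‖ ^ 2 + ‖vj'‖ ^ 2 - (‖vi‖ ^ 2 + ‖vj‖ ^ 2)
      = κ * (κ - 1) * ‖g‖ * (‖g‖ - ⟪g, ω⟫) ∧
    ‖vi'‖ ^ 2 + ‖vj'‖ ^ 2 ≤ ‖vi‖ ^ 2 + ‖vj‖ ^ 2 ∧
    (κ = 0 ∨ κ = 1 → ‖vi'‖ ^ 2 + ‖vj'‖ ^ 2 = ‖vi‖ ^ 2 + ‖vj‖ ^ 2) := by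
  set u : EuclideanSpace ℝ (Fin d) := g - ‖g‖ • ω with hu
  have hmom : vi' + vj' = vi + vj := by
    rw [hvi', hvj']; abel
  have hωω : ⟪ω, ω⟫ = 1 := by
    rw [real_inner_self_eq_norm_sq, hω]; norm_num
  have hgg : ⟪g, g⟫ = ‖g‖ ^ 2 := real_inner_self_eq_norm_sq g
  have hgu : ⟪g, u⟫ = ‖g‖ ^ 2 - ‖g‖ * ⟪g, ω⟫ := by
    rw [hu, inner_sub_right, real_inner_smul_right, hgg]
  have huu : ‖u‖ ^ 2 = 2 * (‖g‖ ^ 2 - ‖g‖ * ⟪g, ω⟫) := by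
    rw [← real_inner_self_eq_norm_sq]
    rw [hu, inner_sub_left, inner_sub_right, inner_sub_right,
      real_inner_smul_right, real_inner_smul_left, real_inner_smul_left,
      real_inner_smul_right, hgg, hωω, real_inner_comm ω g]
    ring
  have h1 : ‖vi'‖ ^ 2 = ‖vi‖ ^ 2 - 2 * ((κ / 2) * ⟪vi, u⟫) + (κ / 2) ^ 2 * ‖u‖ ^ 2 := by
    rw [hvi', norm_sub_sq_real, real_inner_smul_right, norm_smul]
    rw [mul_pow, Real.norm_eq_abs, sq_abs]
  have h2 : ‖vj'‖ ^ 2 = ‖vj‖ ^ 2 + 2 * ((κ / 2) * ⟪vj, u⟫) + (κ / 2) ^ 2 * ‖u‖ ^ 2 := by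
    rw [hvj', norm_add_sq_real, real_inner_smul_right, norm_smul]
    rw [mul_pow, Real.norm_eq_abs, sq_abs]
  have hsub : ⟪vi, u⟫ - ⟪vj, u⟫ = ⟪g, u⟫ := by
    rw [hg, inner_sub_left]
  have hiden : ‖vi'‖ ^ 2 + ‖vj'‖ ^ 2 - (‖vi‖ ^ 2 + ‖vj‖ ^ 2)
      = κ * (κ - 1) * ‖g‖ * (‖g‖ - ⟪g, ω⟫) := by
    rw [h1, h2]
    have : ‖vi‖ ^ 2 - 2 * ((κ / 2) * ⟪vi, u⟫) + (κ / 2) ^ 2 * ‖u‖ ^ 2 +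
        (‖vj‖ ^ 2 + 2 * ((κ / 2) * ⟪vj, u⟫) + (κ / 2) ^ 2 * ‖u‖ ^ 2) -
        (‖vi‖ ^ 2 + ‖vj‖ ^ 2)
        = -κ * (⟪vi, u⟫ - ⟪vj, u⟫) + (κ ^ 2 / 2) * ‖u‖ ^ 2 := by ring
    rw [this, hsub, hgu, huu]; ring
  have hle : κ * (κ - 1) * ‖g‖ * (‖g‖ - ⟪g, ω⟫) ≤ 0 := by
    have h3 : ⟪g, ω⟫ ≤ ‖g‖ := by
      calc ⟪g, ω⟫ ≤ ‖g‖ * ‖ω‖ := real_inner_le_norm g ω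
        _ = ‖g‖ := by rw [hω, mul_one]
    have h4 : κ * (κ - 1) ≤ 0 :=
      mul_nonpos_of_nonneg_of_nonpos hκ0 (by linarith)
    have h5 : 0 ≤ ‖g‖ * (‖g‖ - ⟪g, ω⟫) :=
      mul_nonneg (norm_nonneg g) (by linarith)
    calc κ * (κ - 1) * ‖g‖ * (‖g‖ - ⟪g, ω⟫)
        = (κ * (κ - 1)) * (‖g‖ * (‖g‖ - ⟪g, ω⟫)) := by ring
      _ ≤ 0 := mul_nonpos_of_nonpos_of_nonneg h4 h5
  refine ⟨hmom, hiden, by linarith, ?_⟩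
  rintro (rfl | rfl) <;> [skip; skip] <;>
    · have := hiden; simp at this <;> linarith
end

section
/- Let κ ∈ {0,1}, let v_i, v_j ∈ ℝ^d with v_i ≠ v_j, let ω ∈ ℝ^d with ‖ω‖ = 1, and define the collided pair v_i' = v_i − (κ/2)(g − ‖g‖ω), v_j' = v_j + (κ/2)(g − ‖g‖ω) with g = v_i − v_j; let u = (v_i + v_j)/2, T = (1/(2d))(‖v_i − u‖² + ‖v_j − u‖²) and T' = (1/(2d))(‖v_i' − u‖² + ‖v_j' − u‖²), and assume T' > 0. Then the thermalized velocities v_i'' = (v_i' − u)√(T/T') + u and v_j'' = (v_j' − u)√(T/T') + u satisfy v_i'' + v_j'' = v_i + v_j and ‖v_i''‖² + ‖v_j''‖² = ‖v_i‖² + ‖v_j‖², i.e. the regularized collision followed by thermalization conserves momentum and kinetic energy exactly. -/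
/-!
Both the collision and the thermalization keep the pair symmetric about the mean velocity `u`,
so momentum is conserved, and the pair energy splits as `2‖u‖²` plus the energy
`‖vᵢ - u‖² + ‖vⱼ - u‖²` relative to `u`. The factor `√(T / T')` rescales the relative
velocities so that this relative energy returns to its pre-collision value `2d T`.
-/

section PairEnergy

variable {E : Type*} [NormedAddCommGroup E] [InnerProductSpace ℝ E]

theorem norm_sq_add_norm_sq_eq_of_sub_add_sub_eq_zero {a b u : E} (h : a - u + (b - u) = 0) :
    ‖a‖ ^ 2 + ‖b‖ ^ 2 = ‖a - u‖ ^ 2 + ‖b - u‖ ^ 2 + 2 * ‖u‖ ^ 2 := by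
  have ha := norm_add_sq_real (a - u) u
  have hb := norm_add_sq_real (b - u) u
  have hcross : inner ℝ (a - u) u + inner ℝ (b - u) u = (0 : ℝ) := by
    rw [← inner_add_left, h, inner_zero_left]
  rw [sub_add_cancel] at ha hb
  linarith

theorem add_eq_and_norm_sq_add_eq_of_rescale_about_center {a b a' b' u : E} {s : ℝ}
    (hc : a - u + (b - u) = 0) (hc' : a' - u + (b' - u) = 0)
    (hs : s ^ 2 * (‖a' - u‖ ^ 2 + ‖b' - u‖ ^ 2) = ‖a - u‖ ^ 2 + ‖b - u‖ ^ 2) :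
    (s • (a' - u) + u) + (s • (b' - u) + u) = a + b ∧
      ‖s • (a' - u) + u‖ ^ 2 + ‖s • (b' - u) + u‖ ^ 2 = ‖a‖ ^ 2 + ‖b‖ ^ 2 := by
  have hsum : s • (a' - u) + u + (s • (b' - u) + u) = s • (a' - u + (b' - u)) + 2 • u := by
    module
  have hab : a + b = a - u + (b - u) + 2 • u := by module
  have hc'' : s • (a' - u) + u - u + (s • (b' - u) + u - u) = 0 := by
    rw [add_sub_cancel_right, add_sub_cancel_right, ← smul_add, hc', smul_zero]
  refine ⟨by rw [hsum, hab, hc, hc', smul_zero], ?_⟩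
  rw [norm_sq_add_norm_sq_eq_of_sub_add_sub_eq_zero hc'',
    norm_sq_add_norm_sq_eq_of_sub_add_sub_eq_zero hc,
    add_sub_cancel_right, add_sub_cancel_right, norm_smul, norm_smul, mul_pow, mul_pow,
    Real.norm_eq_abs, sq_abs, ← hs]
  ring

end PairEnergy

theorem sq_sqrt_div_mul_mul_eq {c S S' : ℝ} (hS : 0 ≤ S) (hS' : 0 ≤ S') (hpos : 0 < c * S') :
    √(c * S / (c * S')) ^ 2 * S' = S := by
  have hc : 0 < c := pos_of_mul_pos_left hpos hS'
  have hS'pos : 0 < S' := pos_of_mul_pos_right hpos hc.le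
  rw [mul_div_mul_left S S' hc.ne', Real.sq_sqrt (div_nonneg hS hS'),
    div_mul_cancel₀ S hS'pos.ne']

theorem stmt_4_general (d : ℕ) (κ : ℝ)
    (vi vj ω : EuclideanSpace ℝ (Fin d))
    (g : EuclideanSpace ℝ (Fin d))
    (vi' vj' : EuclideanSpace ℝ (Fin d))
    (hvi' : vi' = vi - (κ / 2) • (g - ‖g‖ • ω))
    (hvj' : vj' = vj + (κ / 2) • (g - ‖g‖ • ω))
    (u : EuclideanSpace ℝ (Fin d)) (hu : u = (1 / 2 : ℝ) • (vi + vj))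
    (T T' : ℝ)
    (hT : T = (1 / (2 * (d : ℝ))) * (‖vi - u‖ ^ 2 + ‖vj - u‖ ^ 2))
    (hT' : T' = (1 / (2 * (d : ℝ))) * (‖vi' - u‖ ^ 2 + ‖vj' - u‖ ^ 2))
    (hT'pos : 0 < T')
    (vi'' vj'' : EuclideanSpace ℝ (Fin d))
    (hvi'' : vi'' = Real.sqrt (T / T') • (vi' - u) + u)
    (hvj'' : vj'' = Real.sqrt (T / T') • (vj' - u) + u) :
    vi'' + vj'' = vi + vj ∧
    ‖vi''‖ ^ 2 + ‖vj''‖ ^ 2 = ‖vi‖ ^ 2 + ‖vj‖ ^ 2 := by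
  have hcenter : vi - u + (vj - u) = 0 := by rw [hu]; module
  have hcenter' : vi' - u + (vj' - u) = 0 := by rw [hvi', hvj', hu]; module
  have hscale :
      √(T / T') ^ 2 * (‖vi' - u‖ ^ 2 + ‖vj' - u‖ ^ 2) = ‖vi - u‖ ^ 2 + ‖vj - u‖ ^ 2 := by
    rw [hT'] at hT'pos
    rw [hT, hT']
    exact sq_sqrt_div_mul_mul_eq (by positivity) (by positivity) hT'pos
  rw [hvi'', hvj'']
  exact add_eq_and_norm_sq_add_eq_of_rescale_about_center hcenter hcenter' hscale

/-- The regularized collision with κ ∈ {0,1} followed by the thermalization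
process conserves momentum and kinetic energy exactly. -/
theorem stmt_4 (d : ℕ) (κ : ℝ) (hκ : κ = 0 ∨ κ = 1)
    (vi vj ω : EuclideanSpace ℝ (Fin d)) (hij : vi ≠ vj) (hω : ‖ω‖ = 1)
    (g : EuclideanSpace ℝ (Fin d)) (hg : g = vi - vj)
    (vi' vj' : EuclideanSpace ℝ (Fin d))
    (hvi' : vi' = vi - (κ / 2) • (g - ‖g‖ • ω))
    (hvj' : vj' = vj + (κ / 2) • (g - ‖g‖ • ω))
    (u : EuclideanSpace ℝ (Fin d)) (hu : u = (1 / 2 : ℝ) • (vi + vj))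
    (T T' : ℝ)
    (hT : T = (1 / (2 * (d : ℝ))) * (‖vi - u‖ ^ 2 + ‖vj - u‖ ^ 2))
    (hT' : T' = (1 / (2 * (d : ℝ))) * (‖vi' - u‖ ^ 2 + ‖vj' - u‖ ^ 2))
    (hT'pos : 0 < T')
    (vi'' vj'' : EuclideanSpace ℝ (Fin d))
    (hvi'' : vi'' = Real.sqrt (T / T') • (vi' - u) + u)
    (hvj'' : vj'' = Real.sqrt (T / T') • (vj' - u) + u) :
    vi'' + vj'' = vi + vj ∧
    ‖vi''‖ ^ 2 + ‖vj''‖ ^ 2 = ‖vi‖ ^ 2 + ‖vj‖ ^ 2 :=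
  stmt_4_general d κ vi vj ω g vi' vj' hvi' hvj' u hu T T' hT hT' hT'pos vi'' vj'' hvi'' hvj''
end

section
/- Let (Ω, 𝒜, p) be a probability space, let S be a finite-dimensional subspace of L²(Ω, p; ℝ) with orthogonal projection P : L²(Ω,p;ℝ) → S, let d ≥ 1, let ω ∈ ℝ^d with ‖ω‖ = 1, and let v, w ∈ L²(Ω, p; ℝ^d). Define g(z) = ‖v(z) − w(z)‖ and the projected post-collisional velocities v'(z) = (v(z)+w(z))/2 + (1/2)(P g)(z)·ω and w'(z) = (v(z)+w(z))/2 − (1/2)(P g)(z)·ω. Then: (i) v'(z) + w'(z) = v(z) + w(z) for every z (momentum is conserved pointwise in the random parameter, hence mode by mode in any orthonormal basis of S); and (ii) ∫_Ω (‖v'(z)‖² + ‖w'(z)‖²) p(dz) ≤ ∫_Ω (‖v(z)‖² + ‖w(z)‖²) p(dz), with equality if and only if g ∈ S. -/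
/-!
Since `v' + w' = v + w` and `v' - w' = (P g) ω`, the parallelogram law gives
`‖v'‖² + ‖w'‖² = (‖v + w‖² + (P g)²) / 2` pointwise, against `(‖v + w‖² + g²) / 2` before the
collision. Integrating, the two expected energies differ by `(‖P g‖² - ‖g‖²) / 2` in `L²(Ω, p)`,
which is `≤ 0` by Pythagoras for the orthogonal projection, with equality exactly when `P g = g`.
-/

open MeasureTheory

theorem Submodule.norm_starProjection_eq_norm_iff {𝕜 E : Type*} [RCLike 𝕜]
    [NormedAddCommGroup E] [InnerProductSpace 𝕜 E] (K : Submodule 𝕜 E)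
    [K.HasOrthogonalProjection] (x : E) :
    ‖K.starProjection x‖ = ‖x‖ ↔ x ∈ K := by
  have hpythagoras : ‖x‖ * ‖x‖ = ‖K.starProjection x‖ * ‖K.starProjection x‖
      + ‖x - K.starProjection x‖ * ‖x - K.starProjection x‖ := by
    simpa using norm_add_sq_eq_norm_sq_add_norm_sq_of_inner_eq_zero (𝕜 := 𝕜) _ _
      (K.inner_right_of_mem_orthogonal (K.starProjection_apply_mem x)
        (K.sub_starProjection_mem_orthogonal x))
  rw [← K.starProjection_eq_self_iff, ← sub_eq_zero (b := x), ← norm_eq_zero, norm_sub_rev]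
  constructor
  · intro h
    rw [h] at hpythagoras
    exact mul_self_eq_zero.mp (by linarith)
  · intro h
    rw [h, mul_zero, add_zero] at hpythagoras
    exact (mul_self_inj (norm_nonneg _) (norm_nonneg _)).mp hpythagoras.symm

theorem MeasureTheory.L2.integral_norm_sq_eq_norm_sq {Ω F : Type*} [MeasurableSpace Ω]
    {μ : Measure Ω} [NormedAddCommGroup F] [InnerProductSpace ℝ F] (f : Lp F 2 μ) :
    ∫ z, ‖f z‖ ^ 2 ∂μ = ‖f‖ ^ 2 := by
  simp only [← real_inner_self_eq_norm_sq, L2.inner_def]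

theorem norm_sq_add_norm_sq_eq_half {E : Type*} [NormedAddCommGroup E] [InnerProductSpace ℝ E]
    (a b : E) : ‖a‖ ^ 2 + ‖b‖ ^ 2 = (‖a + b‖ ^ 2 + ‖a - b‖ ^ 2) / 2 := by
  linarith [parallelogram_law_with_norm ℝ a b]

theorem integral_norm_sq_add_norm_sq_eq {Ω E F : Type*} [MeasurableSpace Ω] {μ : Measure Ω}
    [NormedAddCommGroup E] [InnerProductSpace ℝ E]
    [NormedAddCommGroup F] [InnerProductSpace ℝ F]
    {a b : Ω → E} (hab : MemLp (a + b) 2 μ)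
    (f : Lp F 2 μ) (hf : ∀ᵐ z ∂μ, ‖a z - b z‖ = ‖f z‖) :
    ∫ z, (‖a z‖ ^ 2 + ‖b z‖ ^ 2) ∂μ = (∫ z, ‖a z + b z‖ ^ 2 ∂μ + ‖f‖ ^ 2) / 2 := by
  have hpointwise : (fun z => ‖a z‖ ^ 2 + ‖b z‖ ^ 2)
      =ᵐ[μ] fun z => (‖a z + b z‖ ^ 2 + ‖f z‖ ^ 2) / 2 :=
    hf.mono fun z hz => by dsimp only; rw [norm_sq_add_norm_sq_eq_half, hz]
  have hab_sq : Integrable (fun z => ‖a z + b z‖ ^ 2) μ := hab.integrable_norm_pow two_ne_zero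
  rw [integral_congr_ae hpointwise, integral_div,
    integral_add hab_sq ((Lp.memLp f).integrable_norm_pow two_ne_zero),
    L2.integral_norm_sq_eq_norm_sq]

theorem stmt_15_general {Ω : Type*} [MeasurableSpace Ω] (p : Measure Ω)
    (S : Submodule ℝ (Lp ℝ 2 p)) [FiniteDimensional ℝ S]
    (d : ℕ) (ω : EuclideanSpace ℝ (Fin d)) (hω : ‖ω‖ = 1)
    (v w : Ω → EuclideanSpace ℝ (Fin d))
    (hv : MemLp v 2 p) (hw : MemLp w 2 p)
    (g : Lp ℝ 2 p) (hg : g =ᵐ[p] fun z => ‖v z - w z‖)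
    (Pg : Ω → ℝ) (hPg : Pg = ((S.orthogonalProjectionOnto g : Lp ℝ 2 p) : Ω → ℝ))
    (v' w' : Ω → EuclideanSpace ℝ (Fin d))
    (hv' : ∀ z, v' z = (1 / 2 : ℝ) • (v z + w z) + (Pg z / 2) • ω)
    (hw' : ∀ z, w' z = (1 / 2 : ℝ) • (v z + w z) - (Pg z / 2) • ω) :
    (∀ z, v' z + w' z = v z + w z) ∧
    (∫ z, (‖v' z‖ ^ 2 + ‖w' z‖ ^ 2) ∂p) ≤ (∫ z, (‖v z‖ ^ 2 + ‖w z‖ ^ 2) ∂p) ∧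
    ((∫ z, (‖v' z‖ ^ 2 + ‖w' z‖ ^ 2) ∂p) = (∫ z, (‖v z‖ ^ 2 + ‖w z‖ ^ 2) ∂p)
      ↔ g ∈ S) := by
  have hsum : ∀ z, v' z + w' z = v z + w z := fun z => by rw [hv', hw']; module
  have hdiff : ∀ z, ‖v' z - w' z‖ = ‖Pg z‖ := fun z => by
    rw [hv', hw', add_sub_sub_cancel, ← add_smul, add_halves, norm_smul, hω, mul_one]
  have hpre := integral_norm_sq_add_norm_sq_eq (hv.add hw) g
    (hg.mono fun z hz => by rw [hz, norm_norm])
  have hpost := integral_norm_sq_add_norm_sq_eq (a := v') (b := w')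
    (by rw [show v' + w' = v + w from funext hsum]; exact hv.add hw) (S.starProjection g)
    (.of_forall fun z => by rw [hdiff, hPg]; rfl)
  simp only [hsum] at hpost
  rw [hpre, hpost, ← S.norm_starProjection_eq_norm_iff]
  have hle := S.norm_starProjection_apply_le g
  refine ⟨hsum, by gcongr, ?_⟩
  rw [div_left_inj' two_ne_zero, add_right_inj, sq_eq_sq₀ (norm_nonneg _) (norm_nonneg _)]

/-- gPC-projected Maxwell collision: replacing the relative speed by its
orthogonal projection onto a finite-dimensional subspace S of L²(Ω,p) conserves
momentum pointwise in the random parameter and makes the expected kinetic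
energy non-increasing, with conservation exactly when the relative speed
already belongs to S. -/
theorem stmt_15 {Ω : Type*} [MeasurableSpace Ω] (p : Measure Ω)
    [IsProbabilityMeasure p]
    (S : Submodule ℝ (Lp ℝ 2 p)) [FiniteDimensional ℝ S]
    (d : ℕ) (hd : 1 ≤ d) (ω : EuclideanSpace ℝ (Fin d)) (hω : ‖ω‖ = 1)
    (v w : Ω → EuclideanSpace ℝ (Fin d))
    (hv : MemLp v 2 p) (hw : MemLp w 2 p)
    (g : Lp ℝ 2 p) (hg : g =ᵐ[p] fun z => ‖v z - w z‖)
    (Pg : Ω → ℝ) (hPg : Pg = ((S.orthogonalProjectionOnto g : Lp ℝ 2 p) : Ω → ℝ))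
    (v' w' : Ω → EuclideanSpace ℝ (Fin d))
    (hv' : ∀ z, v' z = (1 / 2 : ℝ) • (v z + w z) + (Pg z / 2) • ω)
    (hw' : ∀ z, w' z = (1 / 2 : ℝ) • (v z + w z) - (Pg z / 2) • ω) :
    (∀ z, v' z + w' z = v z + w z) ∧
    (∫ z, (‖v' z‖ ^ 2 + ‖w' z‖ ^ 2) ∂p) ≤ (∫ z, (‖v z‖ ^ 2 + ‖w z‖ ^ 2) ∂p) ∧
    ((∫ z, (‖v' z‖ ^ 2 + ‖w' z‖ ^ 2) ∂p) = (∫ z, (‖v z‖ ^ 2 + ‖w z‖ ^ 2) ∂p)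
      ↔ g ∈ S) :=
  stmt_15_general p S d ω hω v w hv hw g hg Pg hPg v' w' hv' hw'
end
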